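/- If (B,i,j) is a stable ADHM datum with μ(B,i,j) = 0, then for every vertex k ∈ I the linear map σ_k : V_k → (⊕_{h∈H : in(h)=k} V_{out(h)}) ⊕ W_k defined by σ_k(v) = ((B_h̄(v))_{h : in(h)=k}, j_k(v)) is injective. -/
import Mathlib


noncomputable section

/-- The data of a finite graph without edge loops, presented by its set `H` of oriented
edges over the vertex set `I`: source and target maps `src`, `tgt`, and a fixed-point-free
orientation-reversing involution `bar`. -/
structure GraphData (I H : Type) where
  src : H → I
  tgt : H → I
  bar : H → H
  bar_invol : ∀ h, bar (bar h) = h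
  bar_ne_self : ∀ h, bar h ≠ h
  src_bar : ∀ h, src (bar h) = tgt h
  tgt_bar : ∀ h, tgt (bar h) = src h
  no_loops : ∀ h, src h ≠ tgt h

/-- Transport of the fibres of a family of normed spaces along an equality of indices. -/
def vCast {I : Type} (V : I → Type)
    [∀ k, NormedAddCommGroup (V k)] [∀ k, NormedSpace ℂ (V k)]
    {k l : I} (e : k = l) : V k ≃L[ℂ] V l := by
  subst e
  exact ContinuousLinearEquiv.refl ℂ (V k)

/-- Stability of an ADHM datum `(B, i, j)`: the only family of subspaces `S k ⊆ V k`
which is `B`-invariant and contained in `ker (j k)` is the zero family. -/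
def IsStable {I H : Type} (G : GraphData I H) (V W : I → Type)
    [∀ k, NormedAddCommGroup (V k)] [∀ k, NormedSpace ℂ (V k)]
    [∀ k, NormedAddCommGroup (W k)] [∀ k, NormedSpace ℂ (W k)]
    (B : ∀ h : H, V (G.src h) →L[ℂ] V (G.tgt h))
    (j : ∀ k : I, V k →L[ℂ] W k) : Prop :=
  ∀ S : ∀ k : I, Submodule ℂ (V k),
    (∀ h : H, ∀ x ∈ S (G.src h), B h x ∈ S (G.tgt h)) →
    (∀ k : I, ∀ x ∈ S k, j k x = 0) →
    ∀ k : I, S k = ⊥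

/-- For an oriented edge `h`, the composite `A ∘ A'` of a map `A` along `h` and a map `A'`
along `bar h`, as an endomorphism of `V (tgt h)`. -/
def barComp {I H : Type} (G : GraphData I H) (V : I → Type)
    [∀ k, NormedAddCommGroup (V k)] [∀ k, NormedSpace ℂ (V k)] (h : H)
    (A : V (G.src h) →L[ℂ] V (G.tgt h))
    (A' : V (G.src (G.bar h)) →L[ℂ] V (G.tgt (G.bar h))) :
    V (G.tgt h) →L[ℂ] V (G.tgt h) :=
  A.comp ((vCast V (G.tgt_bar h) : V (G.tgt (G.bar h)) →L[ℂ] V (G.src h)).comp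
    (A'.comp ((vCast V (G.src_bar h)).symm : V (G.tgt h) →L[ℂ] V (G.src (G.bar h)))))

/-- The `k`-th component of the moment map `μ(B, i, j) = ε B B + i j`. -/
def momentMap {I H : Type} [Fintype H] [DecidableEq I] (G : GraphData I H)
    (V W : I → Type)
    [∀ k, NormedAddCommGroup (V k)] [∀ k, NormedSpace ℂ (V k)]
    [∀ k, NormedAddCommGroup (W k)] [∀ k, NormedSpace ℂ (W k)]
    (ε : H → ℂ)
    (B : ∀ h : H, V (G.src h) →L[ℂ] V (G.tgt h))
    (i : ∀ k : I, W k →L[ℂ] V k) (j : ∀ k : I, V k →L[ℂ] W k) (k : I) :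
    V k →L[ℂ] V k :=
  (∑ h : H, if e : G.tgt h = k then
      ((vCast V e : V (G.tgt h) →L[ℂ] V k).comp
        ((ε h • barComp G V h (B h) (B (G.bar h))).comp
          ((vCast V e).symm : V k →L[ℂ] V (G.tgt h))))
    else 0)
    + (i k).comp (j k)


section Aux

variable {I H : Type} (G : GraphData I H) (V : I → Type)
    [∀ k, NormedAddCommGroup (V k)] [∀ k, NormedSpace ℂ (V k)]

lemma vCast_rfl {k : I} (x : V k) : vCast V rfl x = x := rfl

lemma vCast_symm_apply {k l : I} (e : k = l) (x : V l) :
    (vCast V e).symm x = vCast V e.symm x := by subst e; rfl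

lemma vCast_vCast {a b c : I} (e1 : a = b) (e2 : b = c) (x : V a) :
    vCast V e2 (vCast V e1 x) = vCast V (e1.trans e2) x := by subst e1; subst e2; rfl

lemma B_cast (B : ∀ h : H, V (G.src h) →L[ℂ] V (G.tgt h)) {h h' : H} (e : h = h')
    (x : V (G.src h)) :
    B h' (vCast V (congrArg G.src e) x) = vCast V (congrArg G.tgt e) (B h x) := by
  subst e; rfl

end Aux

/-- If `(B, i, j)` is a stable ADHM datum with `μ(B,i,j) = 0`, then for
every vertex `k` the map `σ_k : V_k → (⊕_{h : in(h)=k} V_{out(h)}) ⊕ W_k`,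
`v ↦ ((B_{h̄} v)_h, j_k v)`, is injective. -/
theorem statement6
    {I H : Type} [Fintype I] [Fintype H] [DecidableEq I]
    (G : GraphData I H) (V W : I → Type)
    [∀ k, NormedAddCommGroup (V k)] [∀ k, NormedSpace ℂ (V k)]
    [∀ k, FiniteDimensional ℂ (V k)]
    [∀ k, NormedAddCommGroup (W k)] [∀ k, NormedSpace ℂ (W k)]
    [∀ k, FiniteDimensional ℂ (W k)]
    (ε : H → ℂ) (hε0 : ∀ h, ε h ≠ 0) (hεbar : ∀ h, ε (G.bar h) = - ε h)
    (B : ∀ h : H, V (G.src h) →L[ℂ] V (G.tgt h))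
    (i : ∀ k : I, W k →L[ℂ] V k) (j : ∀ k : I, V k →L[ℂ] W k)
    (hst : IsStable G V W B j)
    (hμ : ∀ k : I, momentMap G V W ε B i j k = 0) :
    ∀ k : I, Function.Injective (fun v : V k =>
      ((fun h : {h : H // G.tgt h = k} =>
          B (G.bar h.1) ((vCast V ((G.src_bar h.1).trans h.2)).symm v)),
        j k v)) := by
  intro k v1 v2 hEq
  have hB : ∀ h' : {h : H // G.tgt h = k},
      B (G.bar h'.1) ((vCast V ((G.src_bar h'.1).trans h'.2)).symm v1)
        = B (G.bar h'.1) ((vCast V ((G.src_bar h'.1).trans h'.2)).symm v2) :=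
    fun h' => congrFun (congrArg Prod.fst hEq) h'
  have hj : j k v1 = j k v2 := congrArg Prod.snd hEq
  set v := v1 - v2 with hv
  -- key: all maps out of k kill v
  have key : ∀ h : H, ∀ e : k = G.src h, B h (vCast V e v) = 0 := by
    intro h e
    have hh : G.tgt (G.bar h) = k := (G.tgt_bar h).trans e.symm
    have h0 : B (G.bar (G.bar h))
        ((vCast V ((G.src_bar (G.bar h)).trans hh)).symm v) = 0 := by
      have := hB ⟨G.bar h, hh⟩
      simp only [map_sub, hv]
      rw [sub_eq_zero]
      exact this
    rw [vCast_symm_apply] at h0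
    set p : k = G.src (G.bar (G.bar h)) := ((G.src_bar (G.bar h)).trans hh).symm
    have e2 := G.bar_invol h
    have h1 := B_cast G V B e2 (vCast V p v)
    rw [vCast_vCast] at h1
    have hpr : (p.trans (congrArg G.src e2)) = e := Subsingleton.elim _ _
    rw [hpr, h0] at h1
    rw [h1]
    simp
  have hjv : j k v = 0 := by rw [hv, map_sub, sub_eq_zero]; exact hj
  -- the invariant family of subspaces
  set S : ∀ l : I, Submodule ℂ (V l) :=
    fun l => Submodule.span ℂ {x : V l | ∃ e : k = l, vCast V e v = x} with hS
  have hinv : ∀ h : H, ∀ x ∈ S (G.src h), B h x ∈ S (G.tgt h) := by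
    intro h x hx
    refine Submodule.span_induction (p := fun x _ => B h x ∈ S (G.tgt h)) ?_ ?_ ?_ ?_ hx
    · rintro x ⟨e, rfl⟩
      rw [key h e]
      exact Submodule.zero_mem _
    · simp only [map_zero]; exact Submodule.zero_mem _
    · intro a b _ _ ha hb
      rw [map_add]; exact Submodule.add_mem _ ha hb
    · intro c a _ ha
      rw [map_smul]; exact Submodule.smul_mem _ _ ha
  have hjS : ∀ l : I, ∀ x ∈ S l, j l x = 0 := by
    intro l x hx
    refine Submodule.span_induction (p := fun x _ => j l x = 0) ?_ ?_ ?_ ?_ hx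
    · rintro x ⟨e, rfl⟩
      subst e
      rw [vCast_rfl]
      exact hjv
    · simp
    · intro a b _ _ ha hb; rw [map_add, ha, hb, add_zero]
    · intro c a _ ha; rw [map_smul, ha, smul_zero]
  have hk := hst S hinv hjS k
  have hvS : v ∈ S k := Submodule.subset_span ⟨rfl, vCast_rfl V v⟩
  rw [hk] at hvS
  have : v = 0 := Submodule.mem_bot ℂ |>.1 hvS
  rw [hv] at this
  exact sub_eq_zero.mp this
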